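/- arXiv:1508.07426 — 3 statements merged into one kernel-verified Lean document; each statement's English description precedes it below -/
import Mathlib

section
/- Let N ≥ 3 and 1 ≤ k ≤ N. Suppose p : [0,∞) → (0,∞) and h : [0,∞) → [0,∞) are continuous, h is nondecreasing with h(s) > 0 for s > 0, and p satisfies ∫_0^∞ ( (k/t^(N-k)) ∫_0^t (s^(N-1)/C(N-1,k-1)) p(s)^k ds )^(1/k) dt = ∞. If u : [0,∞) → [0,∞) is continuous, nondecreasing, not identically zero, and satisfies u(r) = u(0) + ∫_0^r ( (k/t^(N-k)) ∫_0^t (s^(N-1)/C(N-1,k-1)) p(s)^k h(u(s))^k ds )^(1/k) dt for all r ≥ 0, then u(r) → ∞ as r → ∞. -/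
/-!
Pick `R` with `u R > 0`; then `h (u s) ≥ h (u R) > 0` for `s ≥ R`. For `t ≥ R + 1` the part of
`∫₀ᵗ s^(N-1) p^k` over `[0, R]` is at most a fixed fraction of the whole, so the inner integral in
the equation for `u` is at least `c > 0` times the one in the divergence condition. Hence `u'`
dominates a positive multiple of a function whose integral diverges.
-/

open Real intervalIntegral Filter Set MeasureTheory

/-- If `t^(N-k) u'(t)^k = k ∫₀ᵗ s^(N-1) f(s) ds` (the integrated radial `k`-Hessian equation)
and `u' ≥ 0`, then `u' = radialSlope N k (s ↦ s^(N-1) f(s))`. -/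
noncomputable def radialSlope (N k : ℕ) (w : ℝ → ℝ) (t : ℝ) : ℝ :=
  ((k / t ^ (N - k)) * ∫ s in (0 : ℝ)..t, w s) ^ ((1 : ℝ) / k)

lemma ContinuousOn.intervalIntegrable_of_Ici {f : ℝ → ℝ} {a b c : ℝ}
    (hf : ContinuousOn f (Ici c)) (ha : c ≤ a) (hb : c ≤ b) :
    IntervalIntegrable f volume a b :=
  (hf.mono (ordConnected_Ici.uIcc_subset ha hb)).intervalIntegrable

section radialSlope

variable {N k : ℕ} {w : ℝ → ℝ}

lemma continuousOn_radialSlope (hw : ContinuousOn w (Ici 0)) {x : ℝ} (hx : 0 ≤ x) :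
    ContinuousOn (radialSlope N k w) (Ioc 0 x) := by
  have hprim : ContinuousOn (fun t => ∫ s in (0 : ℝ)..t, w s) (Ioc 0 x) :=
    (continuousOn_primitive_interval' (hw.intervalIntegrable_of_Ici le_rfl hx)
      left_mem_uIcc).mono (Ioc_subset_Icc_self.trans Icc_subset_uIcc)
  refine ((continuousOn_const.div (continuousOn_pow _) ?_).mul hprim).rpow_const ?_
  · exact fun t ht => pow_ne_zero _ ht.1.ne'
  · exact fun _ _ => Or.inr (by positivity)

lemma mul_integral_le_of_le_mul_pow (hN : 0 < N) (hw : ContinuousOn w (Ici 0)) {x B t : ℝ}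
    (hwB : ∀ s ∈ Icc 0 x, w s ≤ B * s ^ (N - 1)) (ht : t ∈ Ioc 0 x) :
    k / t ^ (N - k) * ∫ s in (0 : ℝ)..t, w s ≤ k * |B| * x ^ (N - (N - k)) / N := by
  have ht0 : 0 < t := ht.1
  have hint : ∫ s in (0 : ℝ)..t, w s ≤ B * (t ^ N / N) := by
    calc ∫ s in (0 : ℝ)..t, w s ≤ ∫ s in (0 : ℝ)..t, B * s ^ (N - 1) :=
          integral_mono_on ht0.le (hw.intervalIntegrable_of_Ici le_rfl ht0.le)
            (intervalIntegrable_pow _ |>.const_mul B)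
            (fun s hs => hwB s ⟨hs.1, hs.2.trans ht.2⟩)
      _ = B * (t ^ N / N) := by
          have hcast : ((N - 1 : ℕ) : ℝ) + 1 = N := by exact_mod_cast Nat.sub_add_cancel hN
          rw [intervalIntegral.integral_const_mul, integral_pow, Nat.sub_add_cancel hN, hcast]
          simp [zero_pow hN.ne']
  have hsplit : t ^ N = t ^ (N - k) * t ^ (N - (N - k)) := by
    rw [← pow_add, Nat.add_sub_cancel' (Nat.sub_le N k)]
  calc k / t ^ (N - k) * ∫ s in (0 : ℝ)..t, w s ≤ k / t ^ (N - k) * (B * (t ^ N / N)) :=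
        mul_le_mul_of_nonneg_left hint (by positivity)
    _ = k * B * t ^ (N - (N - k)) / N := by
        rw [hsplit]; field_simp
    _ ≤ k * |B| * x ^ (N - (N - k)) / N := by
        gcongr
        · exact le_abs_self B
        · exact ht.2

lemma intervalIntegrable_radialSlope (hN : 0 < N) (hw : ContinuousOn w (Ici 0))
    (hw0 : ∀ s, 0 ≤ s → 0 ≤ w s) {q : ℝ → ℝ} (hq : ContinuousOn q (Ici 0))
    (hwq : ∀ s, 0 ≤ s → w s ≤ q s * s ^ (N - 1)) {x : ℝ} (hx : 0 ≤ x) :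
    IntervalIntegrable (radialSlope N k w) volume 0 x := by
  obtain ⟨z, hz, hzmax⟩ := isCompact_Icc.exists_isMaxOn (nonempty_Icc.2 hx)
    (hq.mono fun s hs => hs.1)
  have hwB : ∀ s ∈ Icc 0 x, w s ≤ q z * s ^ (N - 1) := fun s hs =>
    (hwq s hs.1).trans (mul_le_mul_of_nonneg_right (hzmax hs) (pow_nonneg hs.1 _))
  rw [intervalIntegrable_iff_integrableOn_Ioc_of_le hx]
  refine Integrable.mono' (integrableOn_const (C := (k * |q z| * x ^ (N - (N - k)) / N) ^
      ((1 : ℝ) / k)) measure_Ioc_lt_top.ne)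
    ((continuousOn_radialSlope hw hx).aestronglyMeasurable measurableSet_Ioc) ?_
  refine (ae_restrict_iff' measurableSet_Ioc).2 (ae_of_all _ fun t ht => ?_)
  have hbase : 0 ≤ k / t ^ (N - k) * ∫ s in (0 : ℝ)..t, w s :=
    mul_nonneg (by have := ht.1.le; positivity)
      (integral_nonneg ht.1.le fun s hs => hw0 s hs.1)
  rw [radialSlope, norm_of_nonneg (rpow_nonneg hbase _)]
  exact rpow_le_rpow hbase (mul_integral_le_of_le_mul_pow hN hw hwB ht) (by positivity)

lemma rpow_mul_radialSlope_le {Φ : ℝ → ℝ} {a t : ℝ} (ha : 0 ≤ a) (ht : 0 ≤ t)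
    (hw : 0 ≤ ∫ s in (0 : ℝ)..t, w s)
    (hwΦ : a * ∫ s in (0 : ℝ)..t, w s ≤ ∫ s in (0 : ℝ)..t, Φ s) :
    a ^ ((1 : ℝ) / k) * radialSlope N k w t ≤ radialSlope N k Φ t := by
  have hkt : 0 ≤ (k : ℝ) / t ^ (N - k) := by positivity
  rw [radialSlope, radialSlope, ← mul_rpow ha (mul_nonneg hkt hw)]
  refine rpow_le_rpow (by positivity) ?_ (by positivity)
  calc a * (k / t ^ (N - k) * ∫ s in (0 : ℝ)..t, w s)
      = k / t ^ (N - k) * (a * ∫ s in (0 : ℝ)..t, w s) := by ring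
    _ ≤ k / t ^ (N - k) * ∫ s in (0 : ℝ)..t, Φ s := mul_le_mul_of_nonneg_left hwΦ hkt

end radialSlope

lemma exists_pos_mul_integral_le_integral {g : ℝ → ℝ} {R T : ℝ} (hR : 0 ≤ R) (hRT : R ≤ T)
    (hg : ContinuousOn g (Ici 0)) (hg0 : ∀ s, 0 ≤ s → 0 ≤ g s)
    (hpos : 0 < ∫ s in R..T, g s) :
    ∃ c > 0, ∀ t, T ≤ t → c * ∫ s in (0 : ℝ)..t, g s ≤ ∫ s in R..t, g s := by
  set a := ∫ s in (0 : ℝ)..R, g s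
  set b := ∫ s in R..T, g s
  have ha : 0 ≤ a := integral_nonneg hR fun s hs => hg0 s hs.1
  refine ⟨b / (a + b), by positivity, fun t ht => ?_⟩
  have hb : b ≤ ∫ s in R..t, g s :=
    integral_mono_interval le_rfl hRT ht
      (ae_restrict_of_forall_mem measurableSet_Ioc fun s hs => hg0 s (hR.trans hs.1.le))
      (hg.intervalIntegrable_of_Ici hR (hR.trans (hRT.trans ht)))
  rw [← integral_add_adjacent_intervals (hg.intervalIntegrable_of_Ici le_rfl hR)
    (hg.intervalIntegrable_of_Ici hR (hR.trans (hRT.trans ht))), div_mul_eq_mul_div,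
    div_le_iff₀ (by positivity)]
  nlinarith

lemma exists_eventually_mul_radialSlope_le {N k : ℕ} {g v : ℝ → ℝ} {R : ℝ} (hR : 0 ≤ R)
    (hg : ContinuousOn g (Ici 0)) (hg0 : ∀ s, 0 ≤ s → 0 ≤ g s) (hgpos : ∀ s, 0 < s → 0 < g s)
    (hv : ContinuousOn v (Ici 0)) (hv0 : ∀ s, 0 ≤ s → 0 ≤ v s) (hvmono : MonotoneOn v (Ici 0))
    (hvR : 0 < v R) :
    ∃ β > 0, ∀ᶠ t in atTop,
      β * radialSlope N k g t ≤ radialSlope N k (fun s => g s * v s ^ k) t := by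
  have hgR : 0 < ∫ s in R..R + 1, g s :=
    intervalIntegral_pos_of_pos_on (hg.intervalIntegrable_of_Ici hR (by linarith))
      (fun s hs => hgpos s (hR.trans_lt hs.1)) (by linarith)
  obtain ⟨c, hc, hcg⟩ := exists_pos_mul_integral_le_integral hR (by linarith) hg hg0 hgR
  have hvg : ∀ s, R ≤ s → v R ^ k * g s ≤ g s * v s ^ k := fun s hs => by
    rw [mul_comm]
    exact mul_le_mul_of_nonneg_left
      (pow_le_pow_left₀ hvR.le (hvmono hR (hR.trans hs) hs) k) (hg0 s (hR.trans hs))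
  have hΦ : ContinuousOn (fun s => g s * v s ^ k) (Ici 0) := hg.mul (hv.pow k)
  have hΦ0 : ∀ s, 0 ≤ s → 0 ≤ g s * v s ^ k := fun s hs =>
    mul_nonneg (hg0 s hs) (pow_nonneg (hv0 s hs) k)
  refine ⟨(v R ^ k * c) ^ ((1 : ℝ) / k), by positivity, ?_⟩
  filter_upwards [eventually_ge_atTop (R + 1)] with t ht
  have hRt : R ≤ t := by linarith
  refine rpow_mul_radialSlope_le (by positivity) (hR.trans hRt)
    (integral_nonneg (hR.trans hRt) fun s hs => hg0 s hs.1) ?_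
  calc v R ^ k * c * ∫ s in (0 : ℝ)..t, g s ≤ v R ^ k * ∫ s in R..t, g s := by
        rw [mul_assoc]; exact mul_le_mul_of_nonneg_left (hcg t ht) (by positivity)
    _ = ∫ s in R..t, v R ^ k * g s := (intervalIntegral.integral_const_mul _ _).symm
    _ ≤ ∫ s in R..t, g s * v s ^ k :=
        integral_mono_on hRt ((hg.intervalIntegrable_of_Ici hR (hR.trans hRt)).const_mul _)
          (hΦ.intervalIntegrable_of_Ici hR (hR.trans hRt)) fun s hs => hvg s hs.1
    _ ≤ ∫ s in (0 : ℝ)..t, g s * v s ^ k :=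
        integral_mono_interval hR hRt le_rfl
          (ae_restrict_of_forall_mem measurableSet_Ioc fun s hs => hΦ0 s hs.1.le)
          (hΦ.intervalIntegrable_of_Ici le_rfl (hR.trans hRt))

lemma tendsto_integral_of_eventually_mul_le {F G : ℝ → ℝ} {β : ℝ} (hβ : 0 < β)
    (hF : ∀ x, 0 ≤ x → IntervalIntegrable F volume 0 x)
    (hG : ∀ x, 0 ≤ x → IntervalIntegrable G volume 0 x)
    (hGF : ∀ᶠ t in atTop, β * G t ≤ F t)
    (hGtop : Tendsto (fun r => ∫ t in (0 : ℝ)..r, G t) atTop atTop) :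
    Tendsto (fun r => ∫ t in (0 : ℝ)..r, F t) atTop atTop := by
  obtain ⟨T, hT⟩ := (hGF.and (eventually_ge_atTop 0)).exists_forall_of_atTop
  refine tendsto_atTop_mono' _ ?_ (tendsto_atTop_add_const_left _
    ((∫ t in (0 : ℝ)..T, F t) - β * ∫ t in (0 : ℝ)..T, G t) (hGtop.const_mul_atTop hβ))
  filter_upwards [eventually_ge_atTop T] with r hr
  have hT0 := (hT T le_rfl).2
  have hr0 : 0 ≤ r := hT0.trans hr
  have hmono : β * ∫ t in T..r, G t ≤ ∫ t in T..r, F t := by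
    rw [← intervalIntegral.integral_const_mul]
    exact integral_mono_on hr (((hG T hT0).symm.trans (hG r hr0)).const_mul β)
      ((hF T hT0).symm.trans (hF r hr0)) fun t ht => (hT t ht.1).1
  rw [← integral_add_adjacent_intervals (hF T hT0) ((hF T hT0).symm.trans (hF r hr0)),
    ← integral_add_adjacent_intervals (hG T hT0) ((hG T hT0).symm.trans (hG r hr0))]
  linarith

theorem stmt5_general (N k : ℕ) (hN : 3 ≤ N) (hkN : k ≤ N)
    (p h : ℝ → ℝ)
    (hp : ContinuousOn p (Set.Ici (0 : ℝ))) (hppos : ∀ r ∈ Set.Ici (0 : ℝ), 0 < p r)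
    (hh : ContinuousOn h (Set.Ici (0 : ℝ))) (hhnn : ∀ s ∈ Set.Ici (0 : ℝ), 0 ≤ h s)
    (hhmono : MonotoneOn h (Set.Ici (0 : ℝ))) (hhpos : ∀ s : ℝ, 0 < s → 0 < h s)
    (hdiv : Tendsto (fun r : ℝ =>
        ∫ t in (0 : ℝ)..r,
          ((k / t ^ (N - k)) *
            ∫ s in (0 : ℝ)..t,
              s ^ (N - 1) / (Nat.choose (N - 1) (k - 1) : ℝ) * (p s) ^ k) ^ ((1 : ℝ) / k))
      atTop atTop)
    (u : ℝ → ℝ) (hu : ContinuousOn u (Set.Ici (0 : ℝ)))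
    (hunn : ∀ r ∈ Set.Ici (0 : ℝ), 0 ≤ u r)
    (humono : MonotoneOn u (Set.Ici (0 : ℝ)))
    (hunontriv : ∃ r ∈ Set.Ici (0 : ℝ), 0 < u r)
    (heq : ∀ r ∈ Set.Ici (0 : ℝ),
      u r = u 0 + ∫ t in (0 : ℝ)..r,
        ((k / t ^ (N - k)) *
          ∫ s in (0 : ℝ)..t,
            s ^ (N - 1) / (Nat.choose (N - 1) (k - 1) : ℝ) * (p s) ^ k * (h (u s)) ^ k)
          ^ ((1 : ℝ) / k)) :
    Tendsto u atTop atTop := by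
  obtain ⟨R, hR, huR⟩ := hunontriv
  set C : ℝ := (Nat.choose (N - 1) (k - 1) : ℝ)
  have hC : 0 < C := Nat.cast_pos.2 (Nat.choose_pos (Nat.sub_le_sub_right hkN 1))
  set g : ℝ → ℝ := fun s => s ^ (N - 1) / C * p s ^ k
  set v : ℝ → ℝ := fun s => h (u s)
  have hq : ContinuousOn (fun s => p s ^ k / C) (Ici 0) := (hp.pow k).div_const C
  have hg : ContinuousOn g (Ici 0) := ((continuous_pow _).continuousOn.div_const _).mul (hp.pow k)
  have hg0 : ∀ s, 0 ≤ s → 0 ≤ g s := fun s hs => by have := hppos s hs; positivity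
  have hv : ContinuousOn v (Ici 0) := hh.comp hu hunn
  have hv0 : ∀ s, 0 ≤ s → 0 ≤ v s := fun s hs => hhnn _ (hunn s hs)
  have hN0 : 0 < N := by omega
  have hGint : ∀ x, 0 ≤ x → IntervalIntegrable (radialSlope N k g) volume 0 x :=
    fun x => intervalIntegrable_radialSlope hN0 hg hg0 hq fun s _ => (by ring : g s = _).le
  have hFint : ∀ x, 0 ≤ x →
      IntervalIntegrable (radialSlope N k fun s => g s * v s ^ k) volume 0 x :=
    fun x => intervalIntegrable_radialSlope (q := fun s => p s ^ k / C * v s ^ k) hN0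
      (hg.mul (hv.pow k)) (fun s hs => mul_nonneg (hg0 s hs) (pow_nonneg (hv0 s hs) k))
      (hq.mul (hv.pow k)) fun s _ => (by ring : g s * v s ^ k = _).le
  obtain ⟨β, hβ, hGF⟩ := exists_eventually_mul_radialSlope_le hR hg hg0
    (fun s hs => by have := hppos s hs.le; positivity) hv hv0 (hhmono.comp humono hunn)
    (hhpos _ huR)
  refine (tendsto_atTop_add_const_left _ (u 0)
    (tendsto_integral_of_eventually_mul_le hβ hFint hGint hGF hdiv)).congr' ?_
  filter_upwards [eventually_ge_atTop 0] with r hr using (heq r hr).symm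

/-- Largeness part of Theorem 2: under the divergence condition on `p`,
any nonnegative nontrivial nondecreasing solution of the integral equation is large. -/
theorem stmt5 (N k : ℕ) (hN : 3 ≤ N) (hk1 : 1 ≤ k) (hkN : k ≤ N)
    (p h : ℝ → ℝ)
    (hp : ContinuousOn p (Set.Ici (0 : ℝ))) (hppos : ∀ r ∈ Set.Ici (0 : ℝ), 0 < p r)
    (hh : ContinuousOn h (Set.Ici (0 : ℝ))) (hhnn : ∀ s ∈ Set.Ici (0 : ℝ), 0 ≤ h s)
    (hhmono : MonotoneOn h (Set.Ici (0 : ℝ))) (hhpos : ∀ s : ℝ, 0 < s → 0 < h s)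
    (hdiv : Tendsto (fun r : ℝ =>
        ∫ t in (0 : ℝ)..r,
          ((k / t ^ (N - k)) *
            ∫ s in (0 : ℝ)..t,
              s ^ (N - 1) / (Nat.choose (N - 1) (k - 1) : ℝ) * (p s) ^ k) ^ ((1 : ℝ) / k))
      atTop atTop)
    (u : ℝ → ℝ) (hu : ContinuousOn u (Set.Ici (0 : ℝ)))
    (hunn : ∀ r ∈ Set.Ici (0 : ℝ), 0 ≤ u r)
    (humono : MonotoneOn u (Set.Ici (0 : ℝ)))
    (hunontriv : ∃ r ∈ Set.Ici (0 : ℝ), 0 < u r)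
    (heq : ∀ r ∈ Set.Ici (0 : ℝ),
      u r = u 0 + ∫ t in (0 : ℝ)..r,
        ((k / t ^ (N - k)) *
          ∫ s in (0 : ℝ)..t,
            s ^ (N - 1) / (Nat.choose (N - 1) (k - 1) : ℝ) * (p s) ^ k * (h (u s)) ^ k)
          ^ ((1 : ℝ) / k)) :
    Tendsto u atTop atTop :=
  stmt5_general N k hN hkN p h hp hppos hh hhnn hhmono hhpos hdiv u hu hunn humono hunontriv heq
end

section
/- Let k ≥ 1 be a natural number and N ≥ 3, and let w : (0,∞) → ℝ be C² with w' ≥ 0. Suppose [ (r^(N-k)/k) (w'(r))^k ]' = (r^(N-1)/C(N-1,k-1)) P(r) for all r > 0, where P ≥ 0 is continuous. Then for all r > 0, { [ r^(N/k - 1) w'(r) ]^(k+1) }' = ((k+1)/C(N-1,k-1)) · P(r) · r^(N + N/k - 2) · w'(r). -/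
open Real

/-!
With `g(t) = t^(N/k - 1) w'(t)` one has `t^(N-k) w'(t)^k / k = g(t)^k / k`, so the radial
equation reads `g^(k-1) g' = r^(N-1) P / C(N-1,k-1)`. Multiplying by `(k+1) g` gives
`(g^(k+1))' = (k+1) g · r^(N-1) P / C(N-1,k-1)`, and `g(r) r^(N-1) = r^(N + N/k - 2) w'(r)`.
-/

theorem hasDerivAt_pow_succ_eq_mul_deriv_pow_div {𝕜 : Type*} [NontriviallyNormedField 𝕜]
    [CharZero 𝕜] {g : 𝕜 → 𝕜} {g' r : 𝕜} {k : ℕ} (hk : k ≠ 0) (hg : HasDerivAt g g' r) :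
    HasDerivAt (fun t => g t ^ (k + 1))
      ((k + 1) * g r * deriv (fun t => g t ^ k / k) r) r := by
  have hdiv : HasDerivAt (fun t => g t ^ k / k) (g r ^ (k - 1) * g') r := by
    refine ((hg.pow k).div_const (k : 𝕜)).congr_deriv ?_
    rw [mul_assoc, mul_div_cancel_left₀ _ (Nat.cast_ne_zero.mpr hk)]
  refine (hg.pow (k + 1)).congr_deriv ?_
  obtain ⟨j, rfl⟩ := Nat.exists_eq_succ_of_ne_zero hk
  rw [hdiv.deriv]
  push_cast
  ring

theorem Real.rpow_div_sub_one_pow {t : ℝ} (ht : 0 < t) {k N : ℕ} (hk : k ≠ 0) (hkN : k ≤ N) :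
    (t ^ ((N : ℝ) / k - 1)) ^ k = t ^ (N - k) := by
  rw [← rpow_natCast _ k, ← rpow_mul ht.le, ← rpow_natCast, Nat.cast_sub hkN, sub_mul,
    div_mul_cancel₀ _ (Nat.cast_ne_zero.mpr hk), one_mul]

theorem Real.rpow_div_sub_one_mul_pow {t : ℝ} (ht : 0 < t) {N : ℕ} (hN : 1 ≤ N) (k : ℕ) :
    t ^ ((N : ℝ) / k - 1) * t ^ (N - 1) = t ^ ((N : ℝ) + N / k - 2) := by
  rw [← rpow_natCast t (N - 1), ← rpow_add ht, Nat.cast_sub hN]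
  ring_nf

theorem stmt7_general (k N : ℕ) (hk : 1 ≤ k) (hkN : k ≤ N)
    (w : ℝ → ℝ) (hw : ContDiffOn ℝ 2 w (Set.Ioi (0 : ℝ)))
    (P : ℝ → ℝ)
    (heq : ∀ r ∈ Set.Ioi (0 : ℝ),
      deriv (fun t => t ^ (N - k) / k * (deriv w t) ^ k) r =
        r ^ (N - 1) / (Nat.choose (N - 1) (k - 1) : ℝ) * P r) :
    ∀ r ∈ Set.Ioi (0 : ℝ),
      deriv (fun t => (t ^ ((N : ℝ) / k - 1) * deriv w t) ^ (k + 1)) r =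
        ((k : ℝ) + 1) / (Nat.choose (N - 1) (k - 1) : ℝ) * P r *
          r ^ ((N : ℝ) + (N : ℝ) / k - 2) * deriv w r := by
  intro r hr
  have hk0 : k ≠ 0 := by omega
  set g : ℝ → ℝ := fun t => t ^ ((N : ℝ) / k - 1) * deriv w t
  have hdw : DifferentiableAt ℝ (deriv w) r :=
    ((hw.deriv_of_isOpen isOpen_Ioi (by norm_num)).differentiableOn one_ne_zero).differentiableAt
      (isOpen_Ioi.mem_nhds hr)
  have hg : DifferentiableAt ℝ g r :=
    ((hasDerivAt_rpow_const (Or.inl (ne_of_gt hr))).differentiableAt).mul hdw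
  have hradial : deriv (fun t => g t ^ k / k) r =
      r ^ (N - 1) / (Nat.choose (N - 1) (k - 1) : ℝ) * P r := by
    rw [← heq r hr]
    refine Filter.EventuallyEq.deriv_eq ?_
    filter_upwards [isOpen_Ioi.mem_nhds hr] with t ht
    simp only [g, mul_pow, rpow_div_sub_one_pow ht hk0 hkN]
    ring
  rw [(hasDerivAt_pow_succ_eq_mul_deriv_pow_div hk0 hg.hasDerivAt).deriv, hradial,
    ← rpow_div_sub_one_mul_pow hr (hk.trans hkN)]
  ring

/-- Identity (14) of the paper: multiplying the radial k-Hessian equation by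
`r^(N+N/k-2) w'(r)` produces an exact derivative. -/
theorem stmt7 (k N : ℕ) (hk : 1 ≤ k) (hN : 3 ≤ N) (hkN : k ≤ N)
    (w : ℝ → ℝ) (hw : ContDiffOn ℝ 2 w (Set.Ioi (0 : ℝ)))
    (hw' : ∀ r ∈ Set.Ioi (0 : ℝ), 0 ≤ deriv w r)
    (P : ℝ → ℝ) (hP : ContinuousOn P (Set.Ioi (0 : ℝ)))
    (hPnn : ∀ r ∈ Set.Ioi (0 : ℝ), 0 ≤ P r)
    (heq : ∀ r ∈ Set.Ioi (0 : ℝ),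
      deriv (fun t => t ^ (N - k) / k * (deriv w t) ^ k) r =
        r ^ (N - 1) / (Nat.choose (N - 1) (k - 1) : ℝ) * P r) :
    ∀ r ∈ Set.Ioi (0 : ℝ),
      deriv (fun t => (t ^ ((N : ℝ) / k - 1) * deriv w t) ^ (k + 1)) r =
        ((k : ℝ) + 1) / (Nat.choose (N - 1) (k - 1) : ℝ) * P r *
          r ^ ((N : ℝ) + (N : ℝ) / k - 2) * deriv w r :=
  stmt7_general k N hk hkN w hw P heq
end

section
/- Let k ≥ 1, N ≥ 3, R > 0 and let w : [0,R] → [1,∞) be C², nondecreasing, with w(0) = 1, w'(0) = 0, satisfying the differential inequality [ (r^(N-k)/k)(w'(r))^k ]' ≤ (r^(N-1)/C(N-1,k-1)) φ · h(w(r))^k on (0,R], where φ > 0 is a constant and h : [1,∞) → (0,∞) is continuous nondecreasing. Then ∫_1^{w(R)} ( ∫_1^t h(s)^k ds )^(-1/(k+1)) dt ≤ ( (k+1) φ / C(N-1,k-1) )^(1/(k+1)) · R^(2k/(k+1)). -/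
open Real intervalIntegral Set MeasureTheory

/-!
Drop the nonnegative lower-order term of the radial inequality and divide by `r ^ (N - k)`:
`(w')^(k-1) w'' ≤ A h(w)^k` with `A = R^(k-1) φ / C(N-1,k-1)`. Multiplying by `w' ≥ 0` and
integrating from `0` gives `(w')^(k+1) ≤ (k+1) A H(w)` with `H(t) = ∫₁ᵗ h^k`, hence
`H(w)^(-1/(k+1)) w' ≤ ((k+1) A)^(1/(k+1))`. Integrating this over `[0, R]` and substituting
`t = w(r)` gives the estimate; the integrand is integrable at `t = 1` because
`H(t) ≥ h(1)^k (t - 1)`.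
-/

lemma pow_mul_deriv_le_deriv_pow_div_mul_pow (m : ℕ) {k : ℕ} (hk : 1 ≤ k) {f : ℝ → ℝ} {r : ℝ}
    (hr : 0 ≤ r) (hf : DifferentiableAt ℝ f r) (hf0 : 0 ≤ f r) :
    r ^ m * (f r ^ (k - 1) * deriv f r) ≤ deriv (fun t => t ^ m / k * f t ^ k) r := by
  have hk0 : (k : ℝ) ≠ 0 := by positivity
  have hderiv : HasDerivAt (fun t => t ^ m / k * f t ^ k)
      (m * r ^ (m - 1) / k * f r ^ k + r ^ m / k * (k * f r ^ (k - 1) * deriv f r)) r :=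
    ((hasDerivAt_pow m r).div_const (k : ℝ)).mul (hf.hasDerivAt.pow k)
  rw [hderiv.deriv]
  calc r ^ m * (f r ^ (k - 1) * deriv f r)
      = r ^ m / k * (k * f r ^ (k - 1) * deriv f r) := by field_simp
    _ ≤ _ := le_add_of_nonneg_left (by positivity)

lemma pow_succ_le_of_pow_mul_deriv_le {v W : ℝ → ℝ} {k : ℕ} {a b : ℝ}
    (hv : Differentiable ℝ v) (hW : Differentiable ℝ W) (hva : v a = 0) (hWa : W a = 0)
    (hle : ∀ r ∈ Ioo a b, v r ^ k * deriv v r ≤ deriv W r) :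
    ∀ r ∈ Icc a b, v r ^ (k + 1) ≤ (k + 1) * W r := by
  set E := fun r => W r - v r ^ (k + 1) / (k + 1)
  have hE : ∀ r, HasDerivAt E (deriv W r - v r ^ k * deriv v r) r := by
    intro r
    have hpow : HasDerivAt (fun r => v r ^ (k + 1) / (k + 1))
        ((k + 1 : ℕ) * v r ^ (k + 1 - 1) * deriv v r / (k + 1)) r :=
      ((hv r).hasDerivAt.pow (k + 1)).div_const ((k : ℝ) + 1)
    refine ((hW r).hasDerivAt.sub hpow).congr_deriv ?_
    rw [Nat.add_sub_cancel]
    push_cast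
    field_simp
  have hmono : MonotoneOn E (Icc a b) :=
    monotoneOn_of_deriv_nonneg (convex_Icc a b)
      (fun r _ => (hE r).continuousAt.continuousWithinAt)
      (fun r _ => (hE r).differentiableAt.differentiableWithinAt)
      (fun r hr => by
        rw [interior_Icc] at hr
        rw [(hE r).deriv]
        linarith [hle r hr])
  intro r hr
  have hEr : E a ≤ E r := hmono (left_mem_Icc.2 (hr.1.trans hr.2)) hr hr.1
  simp only [E, hva, hWa, zero_pow k.succ_ne_zero, zero_div, sub_zero, sub_nonneg] at hEr
  rwa [div_le_iff₀ (by positivity), mul_comm] at hEr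

lemma deriv_pow_succ_le_of_weighted_deriv_le {m k : ℕ} (hk : 1 ≤ k) {R A : ℝ} {g w : ℝ → ℝ}
    (hg : Continuous g) (hw : ContDiff ℝ 2 w) (hw' : ∀ r ∈ Icc 0 R, 0 ≤ deriv w r)
    (hw'0 : deriv w 0 = 0)
    (hineq : ∀ r ∈ Ioo 0 R,
      deriv (fun t => t ^ m / k * deriv w t ^ k) r ≤ r ^ m * (A * g (w r) ^ k)) :
    ∀ r ∈ Icc 0 R, deriv w r ^ (k + 1) ≤ (k + 1) * (A * ∫ s in w 0..w r, g s ^ k) := by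
  have hw1 : ContDiff ℝ 1 (deriv w) := hw.iterate_deriv' 1 1
  have hW : ∀ r, HasDerivAt (fun r => A * ∫ s in w 0..w r, g s ^ k)
      (A * (g (w r) ^ k * deriv w r)) r := fun r =>
    (((hg.pow k).integral_hasStrictDerivAt _ _).hasDerivAt.comp r
      ((hw.differentiable two_ne_zero) r).hasDerivAt).const_mul A
  refine pow_succ_le_of_pow_mul_deriv_le (hw1.differentiable one_ne_zero)
    (fun r => (hW r).differentiableAt) hw'0 (by simp) fun r hr => ?_
  have hwr := hw' r ⟨hr.1.le, hr.2.le⟩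
  have hweighted := (pow_mul_deriv_le_deriv_pow_div_mul_pow m hk hr.1.le
    ((hw1.differentiable one_ne_zero) r) hwr).trans (hineq r hr)
  have hreduced : deriv w r ^ (k - 1) * deriv (deriv w) r ≤ A * g (w r) ^ k :=
    le_of_mul_le_mul_left hweighted (pow_pos hr.1 m)
  calc deriv w r ^ k * deriv (deriv w) r
      = deriv w r * (deriv w r ^ (k - 1) * deriv (deriv w) r) := by
        rw [← mul_assoc, ← pow_succ', Nat.sub_add_cancel hk]
    _ ≤ deriv w r * (A * g (w r) ^ k) := mul_le_mul_of_nonneg_left hreduced hwr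
    _ = deriv (fun r => A * ∫ s in w 0..w r, g s ^ k) r := by rw [(hW r).deriv]; ring

lemma le_rpow_mul_rpow_of_pow_succ_le {x c y : ℝ} {k : ℕ} (hx : 0 ≤ x) (hc : 0 ≤ c) (hy : 0 ≤ y)
    (h : x ^ (k + 1) ≤ c * y) : x ≤ c ^ (1 / (k + 1) : ℝ) * y ^ (1 / (k + 1) : ℝ) := by
  rw [← mul_rpow hc hy, one_div, le_rpow_inv_iff_of_pos hx (mul_nonneg hc hy) (by positivity)]
  exact_mod_cast h

lemma deriv_le_rpow_integral_of_radial_ineq {k N : ℕ} (hk : 1 ≤ k) (hkN : k ≤ N) {R φ : ℝ}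
    (hR : 0 < R) (hφ : 0 ≤ φ) {g w : ℝ → ℝ} (hg : Continuous g) (hg0 : ∀ s, 0 ≤ g s)
    (hw : ContDiff ℝ 2 w) (hwmono : MonotoneOn w (Icc 0 R)) (hw'0 : deriv w 0 = 0)
    (hineq : ∀ r ∈ Ioc 0 R, deriv (fun t => t ^ (N - k) / k * deriv w t ^ k) r ≤
      r ^ (N - 1) / (N - 1).choose (k - 1) * φ * g (w r) ^ k) :
    ∀ r ∈ Ioo 0 R, deriv w r ≤
      ((k + 1) * (φ / (N - 1).choose (k - 1) * R ^ (k - 1))) ^ (1 / (k + 1) : ℝ) *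
        (∫ s in w 0..w r, g s ^ k) ^ (1 / (k + 1) : ℝ) := by
  set C : ℝ := ((N - 1).choose (k - 1) : ℝ)
  set A : ℝ := φ / C * R ^ (k - 1)
  have hw' : ∀ r ∈ Icc 0 R, 0 ≤ deriv w r := fun r hr => by
    rw [← ((hw.differentiable two_ne_zero) r).derivWithin (uniqueDiffOn_Icc hR r hr)]
    exact hwmono.derivWithin_nonneg
  have henergy := deriv_pow_succ_le_of_weighted_deriv_le (m := N - k) (A := A) hk hg hw hw' hw'0
    fun r hr => calc
      _ ≤ r ^ (N - 1) / C * φ * g (w r) ^ k := hineq r ⟨hr.1, hr.2.le⟩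
      _ = r ^ (N - k) * (φ / C * r ^ (k - 1) * g (w r) ^ k) := by
        rw [show N - 1 = N - k + (k - 1) by omega, pow_add]
        ring
      _ ≤ r ^ (N - k) * (A * g (w r) ^ k) := by
        have := hg0 (w r)
        have := hr.1.le
        simp only [A]
        gcongr
        exact hr.2.le
  intro r hr
  have hr' : r ∈ Icc 0 R := ⟨hr.1.le, hr.2.le⟩
  refine le_rpow_mul_rpow_of_pow_succ_le (hw' r hr') (by positivity) ?_ ?_
  · exact integral_nonneg (hwmono (left_mem_Icc.2 hR.le) hr' hr'.1) fun s _ => pow_nonneg (hg0 s) k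
  · simpa only [mul_assoc] using henergy r hr'

lemma mul_sub_le_integral_of_le {f : ℝ → ℝ} {a b m : ℝ} (hab : a ≤ b)
    (hf : IntervalIntegrable f volume a b) (hm : ∀ s ∈ Icc a b, m ≤ f s) :
    m * (b - a) ≤ ∫ s in a..b, f s := by
  simpa [mul_comm] using integral_mono_on hab (intervalIntegrable_const (μ := volume)) hf hm

lemma intervalIntegrable_rpow_of_mul_sub_le {G : ℝ → ℝ} {a b m e : ℝ} (hab : a ≤ b) (hm : 0 < m)
    (he : -1 < e) (he0 : e ≤ 0) (hG : ContinuousOn G (Ioc a b))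
    (hG_ge : ∀ t ∈ Ioc a b, m * (t - a) ≤ G t) :
    IntervalIntegrable (fun t => G t ^ e) volume a b := by
  have hG_pos : ∀ t ∈ Ioc a b, 0 < m * (t - a) := fun t ht => mul_pos hm (sub_pos.2 ht.1)
  have hdom : IntervalIntegrable (fun t => m ^ e * (t - a) ^ e) volume a b := by
    simpa using ((intervalIntegrable_rpow' he (a := 0) (b := b - a)).comp_sub_right a).const_mul
      (m ^ e)
  refine hdom.mono_fun ?_ ?_
  · rw [uIoc_of_le hab]
    exact (hG.rpow_const fun t ht => Or.inl ((hG_pos t ht).trans_le (hG_ge t ht)).ne')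
      |>.aestronglyMeasurable measurableSet_Ioc
  · rw [uIoc_of_le hab]
    refine (ae_restrict_iff' measurableSet_Ioc).2 (ae_of_all _ fun t ht => ?_)
    dsimp only
    rw [norm_of_nonneg (rpow_nonneg ((hG_pos t ht).le.trans (hG_ge t ht)) e),
      norm_of_nonneg (mul_nonneg (rpow_nonneg hm.le e) (rpow_nonneg (sub_pos.2 ht.1).le e)),
      ← mul_rpow hm.le (sub_pos.2 ht.1).le]
    exact rpow_le_rpow_of_nonpos (hG_pos t ht) (hG_ge t ht) he0

lemma integral_le_mul_sub_of_comp_mul_deriv_le {f w : ℝ → ℝ} {a b K : ℝ} (hab : a ≤ b)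
    (hK : 0 ≤ K) (hw : Differentiable ℝ w) (hmono : MonotoneOn w (Icc a b))
    (hf : IntervalIntegrable f volume (w a) (w b)) (hfc : ContinuousOn f (Ioi (w a)))
    (hbound : ∀ r ∈ Ioo a b, w a < w r → f (w r) * deriv w r ≤ K) :
    ∫ t in w a..w b, f t ≤ K * (b - a) := by
  -- Past the last point `c` with `w c = w a`, `w r` stays where `f` is continuous, so there
  -- `r ↦ K r - ∫_{w a}^{w r} f` can be differentiated.
  obtain ⟨c, ⟨hc, hwc⟩, hc_max⟩ : ∃ c, IsGreatest {r ∈ Icc a b | w r = w a} c :=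
    (isCompact_Icc.inter_right (isClosed_eq hw.continuous continuous_const)).exists_isGreatest
      ⟨a, left_mem_Icc.2 hab, rfl⟩
  have hw_gt : ∀ r ∈ Ioc c b, w a < w r := fun r hr =>
    have hr' : r ∈ Icc a b := ⟨hc.1.trans hr.1.le, hr.2⟩
    (hmono (left_mem_Icc.2 hab) hr' hr'.1).lt_of_ne fun h => hr.1.not_ge (hc_max ⟨hr', h.symm⟩)
  have hw_mem : ∀ r ∈ Icc c b, w r ∈ uIcc (w a) (w b) := fun r hr => by
    rw [uIcc_of_le (hmono (left_mem_Icc.2 hab) (right_mem_Icc.2 hab) hab)]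
    exact ⟨hmono (left_mem_Icc.2 hab) ⟨hc.1.trans hr.1, hr.2⟩ (hc.1.trans hr.1),
      hmono ⟨hc.1.trans hr.1, hr.2⟩ (right_mem_Icc.2 hab) hr.2⟩
  have hG' : ∀ r ∈ Ioo c b, HasDerivAt (fun r => K * r - ∫ t in w a..w r, f t)
      (K - f (w r) * deriv w r) r := by
    intro r hr
    have hwr := hw_gt r ⟨hr.1, hr.2.le⟩
    have hint : IntervalIntegrable f volume (w a) (w r) :=
      hf.mono_set (uIcc_subset_uIcc_left (hw_mem r ⟨hr.1.le, hr.2.le⟩))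
    have hF := (integral_hasDerivAt_right hint (hfc.stronglyMeasurableAtFilter isOpen_Ioi _ hwr)
      (hfc.continuousAt (Ioi_mem_nhds hwr))).comp r (hw r).hasDerivAt
    exact (((hasDerivAt_id r).const_mul K).sub hF).congr_deriv (by simp)
  have hcb : c ≤ b := hc.2
  have hG : MonotoneOn (fun r => K * r - ∫ t in w a..w r, f t) (Icc c b) := by
    refine monotoneOn_of_deriv_nonneg (convex_Icc c b) ?_ ?_ ?_
    · exact (continuousOn_const.mul continuousOn_id).sub
        ((continuousOn_primitive_interval' hf left_mem_uIcc).comp hw.continuous.continuousOn hw_mem)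
    · rw [interior_Icc]
      exact fun r hr => (hG' r hr).differentiableAt.differentiableWithinAt
    · rw [interior_Icc]
      intro r hr
      rw [(hG' r hr).deriv, sub_nonneg]
      exact hbound r ⟨hc.1.trans_lt hr.1, hr.2⟩ (hw_gt r ⟨hr.1, hr.2.le⟩)
  have hGcb := hG (left_mem_Icc.2 hcb) (right_mem_Icc.2 hcb) hcb
  simp only [hwc, integral_same, sub_zero] at hGcb
  linarith [mul_le_mul_of_nonneg_left hc.1 hK]

lemma integral_rpow_neg_le_of_deriv_le_mul_rpow {G w : ℝ → ℝ} {a b K m p : ℝ} (hab : a ≤ b)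
    (hK : 0 ≤ K) (hm : 0 < m) (hp : 0 < p) (hp1 : p < 1) (hw : Differentiable ℝ w)
    (hmono : MonotoneOn w (Icc a b)) (hG : Continuous G)
    (hG_ge : ∀ t, w a < t → m * (t - w a) ≤ G t)
    (hderiv : ∀ r ∈ Ioo a b, deriv w r ≤ K * G (w r) ^ p) :
    ∫ t in w a..w b, G t ^ (-p) ≤ K * (b - a) := by
  have hG_pos : ∀ t, w a < t → 0 < G t := fun t ht =>
    (mul_pos hm (sub_pos.2 ht)).trans_le (hG_ge t ht)
  refine integral_le_mul_sub_of_comp_mul_deriv_le hab hK hw hmono ?_ ?_ ?_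
  · exact intervalIntegrable_rpow_of_mul_sub_le
      (hmono (left_mem_Icc.2 hab) (right_mem_Icc.2 hab) hab) hm (by linarith) (by linarith)
      hG.continuousOn fun t ht => hG_ge t ht.1
  · exact hG.continuousOn.rpow_const fun t ht => Or.inl (hG_pos t ht).ne'
  · intro r hr hwr
    calc G (w r) ^ (-p) * deriv w r ≤ G (w r) ^ (-p) * (K * G (w r) ^ p) :=
          mul_le_mul_of_nonneg_left (hderiv r hr) (rpow_nonneg (hG_pos _ hwr).le _)
      _ = K := by rw [mul_left_comm, ← rpow_add (hG_pos _ hwr), neg_add_cancel, rpow_zero, mul_one]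

lemma mul_pow_pred_rpow_mul_self {k : ℕ} (hk : 1 ≤ k) {c R : ℝ} (hc : 0 ≤ c) (hR : 0 < R) :
    (c * R ^ (k - 1)) ^ ((1 : ℝ) / (k + 1)) * R =
      c ^ ((1 : ℝ) / (k + 1)) * R ^ (2 * (k : ℝ) / (k + 1)) := by
  rw [mul_rpow hc (by positivity), ← rpow_natCast, ← rpow_mul hR.le, mul_assoc,
    ← rpow_add_one hR.ne', Nat.cast_sub hk]
  congr 2
  field_simp
  ring

theorem stmt17_general (k N : ℕ) (hk : 1 ≤ k) (hkN : k ≤ N)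
    (R φ : ℝ) (hR : 0 < R) (hφ : 0 < φ)
    (h : ℝ → ℝ) (hh : ContinuousOn h (Set.Ici (1 : ℝ)))
    (hhpos : ∀ s ∈ Set.Ici (1 : ℝ), 0 < h s) (hhmono : MonotoneOn h (Set.Ici (1 : ℝ)))
    (w : ℝ → ℝ) (hw : ContDiff ℝ 2 w)
    (hwmap : ∀ r ∈ Set.Icc (0 : ℝ) R, 1 ≤ w r)
    (hwmono : MonotoneOn w (Set.Icc (0 : ℝ) R))
    (hw0 : w 0 = 1) (hw'0 : deriv w 0 = 0)
    (hineq : ∀ r ∈ Set.Ioc (0 : ℝ) R,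
      deriv (fun t => t ^ (N - k) / k * (deriv w t) ^ k) r ≤
        r ^ (N - 1) / (Nat.choose (N - 1) (k - 1) : ℝ) * φ * (h (w r)) ^ k) :
    (∫ t in (1 : ℝ)..(w R),
        (∫ s in (1 : ℝ)..t, (h s) ^ k) ^ (-(1 : ℝ) / (k + 1))) ≤
      (((k : ℝ) + 1) * φ / (Nat.choose (N - 1) (k - 1) : ℝ)) ^ ((1 : ℝ) / (k + 1))
        * R ^ (2 * (k : ℝ) / (k + 1)) := by
  -- `h` only matters on `[1, ∞)`; extending it by `h 1` makes its primitive differentiable.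
  set g : ℝ → ℝ := fun s => h (max 1 s)
  have hg : Continuous g :=
    hh.comp_continuous (continuous_const.max continuous_id) fun s => le_max_left 1 s
  have hg_eq : ∀ s, 1 ≤ s → g s = h s := fun s hs => by simp only [g, max_eq_right hs]
  have hh1 : 0 < h 1 := hhpos 1 self_mem_Ici
  have hg_ge : ∀ s, h 1 ≤ g s := fun s =>
    hhmono self_mem_Ici (le_max_left 1 s) (le_max_left 1 s)
  have hgrad := deriv_le_rpow_integral_of_radial_ineq hk hkN hR hφ.le hg
    (fun s => hh1.le.trans (hg_ge s)) hw hwmono hw'0 fun r hr => by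
      rw [hg_eq _ (hwmap r ⟨hr.1.le, hr.2⟩)]
      exact hineq r hr
  rw [hw0] at hgrad
  calc _ = ∫ t in w 0..w R, (∫ s in (1 : ℝ)..t, g s ^ k) ^ (-(1 / (k + 1)) : ℝ) := by
        rw [hw0, neg_div]
        refine integral_congr fun t ht => ?_
        rw [uIcc_of_le (hwmap R (right_mem_Icc.2 hR.le))] at ht
        refine congrArg (· ^ _) (integral_congr fun s hs => ?_)
        rw [uIcc_of_le ht.1] at hs
        simp only [hg_eq s hs.1]
    _ ≤ _ * (R - 0) := by
        refine integral_rpow_neg_le_of_deriv_le_mul_rpow hR.le (by positivity) (pow_pos hh1 k)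
          (by positivity) ((div_lt_one (by positivity)).2 (by norm_cast; omega))
          (hw.differentiable two_ne_zero) hwmono
          (continuous_primitive (fun _ _ => (hg.pow k).intervalIntegrable _ _) 1) (fun t ht => ?_)
          hgrad
        rw [hw0] at ht ⊢
        exact mul_sub_le_integral_of_le ht.le ((hg.pow k).intervalIntegrable _ _) fun s _ =>
          pow_le_pow_left₀ hh1.le (hg_ge s) k
    _ = _ := by
        rw [sub_zero, ← mul_assoc, ← mul_div_assoc]
        exact mul_pow_pred_rpow_mul_self hk (by positivity) hR

/-- Full a priori estimate on `[0,R]` from the proof of Theorem 1. -/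
theorem stmt17 (k N : ℕ) (hk : 1 ≤ k) (hN : 3 ≤ N) (hkN : k ≤ N)
    (R φ : ℝ) (hR : 0 < R) (hφ : 0 < φ)
    (h : ℝ → ℝ) (hh : ContinuousOn h (Set.Ici (1 : ℝ)))
    (hhpos : ∀ s ∈ Set.Ici (1 : ℝ), 0 < h s) (hhmono : MonotoneOn h (Set.Ici (1 : ℝ)))
    (w : ℝ → ℝ) (hw : ContDiff ℝ 2 w)
    (hwmap : ∀ r ∈ Set.Icc (0 : ℝ) R, 1 ≤ w r)
    (hwmono : MonotoneOn w (Set.Icc (0 : ℝ) R))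
    (hw0 : w 0 = 1) (hw'0 : deriv w 0 = 0)
    (hineq : ∀ r ∈ Set.Ioc (0 : ℝ) R,
      deriv (fun t => t ^ (N - k) / k * (deriv w t) ^ k) r ≤
        r ^ (N - 1) / (Nat.choose (N - 1) (k - 1) : ℝ) * φ * (h (w r)) ^ k) :
    (∫ t in (1 : ℝ)..(w R),
        (∫ s in (1 : ℝ)..t, (h s) ^ k) ^ (-(1 : ℝ) / (k + 1))) ≤
      (((k : ℝ) + 1) * φ / (Nat.choose (N - 1) (k - 1) : ℝ)) ^ ((1 : ℝ) / (k + 1))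
        * R ^ (2 * (k : ℝ) / (k + 1)) :=
  stmt17_general k N hk hkN R φ hR hφ h hh hhpos hhmono w hw hwmap hwmono hw0 hw'0 hineq
end
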